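/- Fix m ≥ 3 and let μ ∈ Opt(m). If z ∈ (0, 1) satisfies 1 − (m/2)·z > (1 − z)^m, then μ̄(x) > z for every x ∈ supp μ̄. -/

import Mathlib

open Finset

/-- The cyclic successor of an index in `Fin m`. -/
def cnext {m : ℕ} (i : Fin m) : Fin m := ⟨(i.1 + 1) % m, Nat.mod_lt _ i.pos⟩

/-- `μ` is a probability mass on the 2-element subsets of `X`: it is nonnegative,
vanishes on the diagonal, and has total mass 1. -/
def IsProbMass {X : Type*} [Fintype X] [DecidableEq X] (μ : Sym2 X → ℝ) : Prop :=
  (∀ e, 0 ≤ μ e) ∧ (∀ e : Sym2 X, e.IsDiag → μ e = 0) ∧ (∑ e : Sym2 X, μ e) = 1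

/-- The weight `μ(C)` of the labeled cycle `f 0, f 1, ..., f (m-1), f 0`. -/
def cycleWeight {X : Type*} (μ : Sym2 X → ℝ) {m : ℕ} (f : Fin m → X) : ℝ :=
  ∏ i : Fin m, μ s(f i, f (cnext i))

/-- `β(μ; m)`: the sum of `μ(C)` over all unlabeled `m`-cycles `C` in the complete
graph on `X`, computed as the sum over labeled cycles divided by `2m` (each unlabeled
`m`-cycle has exactly `2m` labelings). -/
noncomputable def beta {X : Type*} [Fintype X] [DecidableEq X] (μ : Sym2 X → ℝ) (m : ℕ) : ℝ :=
  (∑ f : Fin m → X, if Function.Injective f then cycleWeight μ f else 0) / (2 * m)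

/-- `β(m)`: the supremum of `β(μ; m)` over all probability masses `μ` on the
2-element subsets of a finite set (every finite set being a copy of some `Fin n`). -/
noncomputable def betaSup (m : ℕ) : ℝ :=
  sSup {b : ℝ | ∃ (n : ℕ) (μ : Sym2 (Fin n) → ℝ), IsProbMass μ ∧ b = beta μ m}

/-- The weighted degree `μ̄(x) = ∑_{y ≠ x} μ(xy)`. -/
noncomputable def wdeg {X : Type*} [Fintype X] [DecidableEq X] (μ : Sym2 X → ℝ) (x : X) : ℝ :=
  ∑ y ∈ Finset.univ.filter (· ≠ x), μ s(x, y)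

/-- The support graph `G_μ`, whose edges are the pairs of positive mass. -/
def supportGraph {X : Type*} (μ : Sym2 X → ℝ) : SimpleGraph X where
  Adj x y := x ≠ y ∧ 0 < μ s(x, y)
  symm := ⟨fun x y h => ⟨h.1.symm, by rw [Sym2.eq_swap]; exact h.2⟩⟩
  loopless := ⟨fun x h => h.1 rfl⟩

/-! Write `S = 2m · β(μ; m)` for the total weight of the labeled `m`-cycles, `S_x` for the weight
of those through `x`, and `d = μ̄(x)`. Two perturbations of an optimal `μ` give two inequalities.
Deleting `x` and renormalising by `(1 - d)⁻¹` shows `(1 - (1 - d)^m) S ≤ S_x`. Moving mass `t`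
onto an edge `e` turns `S` into `(1 - t)^m S + t (1 - t)^(m-1) ∂_e S`, so `∂_e S ≤ m S`; and
`∑_{e ∋ x} μ(e) ∂_e S` counts every cycle through `x` at least twice, whence `2 S_x ≤ m d S`.
Hence `2 (1 - (1 - d)^m) ≤ m d`. But if `0 < d ≤ z`, convexity of `u ↦ u^m` between `1` and
`1 - z` and the hypothesis on `z` give `(1 - d)^m < 1 - (m/2) d`. -/

/-- The first-order optimality condition at `t = 0`, via Bernoulli's inequality. -/
lemma le_mul_of_forall_one_sub_pow_mul_add_le {m : ℕ} {S D : ℝ} (hS : 0 ≤ S)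
    (h : ∀ t ∈ Set.Ioo (0 : ℝ) 1, (1 - t) ^ m * S + t * (1 - t) ^ (m - 1) * D ≤ S) :
    D ≤ m * S := by
  have hbound : ∀ t ∈ Set.Ioo (0 : ℝ) 1, (1 - t) ^ (m - 1) * D ≤ m * S := by
    intro t ht
    have hbern : 1 - m * t ≤ (1 - t) ^ m := by
      simpa [sub_eq_add_neg] using one_add_mul_le_pow (a := -t) (by linarith [ht.2]) m
    have : t * ((1 - t) ^ (m - 1) * D) ≤ t * (m * S) := by
      nlinarith [h t ht, mul_le_mul_of_nonneg_right hbern hS]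
    exact le_of_mul_le_mul_left this ht.1
  have hlim : Filter.Tendsto (fun t : ℝ => (1 - t) ^ (m - 1) * D) (nhdsWithin 0 (Set.Ioi 0))
      (nhds D) := by
    have hcont : Continuous fun t : ℝ => (1 - t) ^ (m - 1) * D := by fun_prop
    simpa using (hcont.tendsto 0).mono_left nhdsWithin_le_nhds
  exact le_of_tendsto hlim (Filter.eventually_of_mem (Ioo_mem_nhdsGT zero_lt_one) hbound)

/-- Convexity of `u ↦ u ^ m` on `[0, ∞)`, between `1` and `1 - z`. -/
lemma one_sub_pow_lt_of_le {m : ℕ} {d z : ℝ} (hd : 0 < d) (hdz : d ≤ z) (hz : z ≤ 1)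
    (h : (1 - z) ^ m < 1 - m / 2 * z) : (1 - d) ^ m < 1 - m / 2 * d := by
  have hz0 : 0 < z := hd.trans_le hdz
  obtain ⟨l, hl0, hl1, rfl⟩ : ∃ l, 0 < l ∧ l ≤ 1 ∧ l * z = d :=
    ⟨d / z, div_pos hd hz0, (div_le_one hz0).2 hdz, div_mul_cancel₀ d hz0.ne'⟩
  have hconv := (convexOn_pow m).2 (Set.mem_Ici.2 zero_le_one) (Set.mem_Ici.2 (sub_nonneg.2 hz))
    (sub_nonneg.2 hl1) hl0.le (sub_add_cancel 1 l)
  simp only [smul_eq_mul, one_pow, mul_one] at hconv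
  rw [show 1 - l + l * (1 - z) = 1 - l * z by ring] at hconv
  linarith [mul_lt_mul_of_pos_left h hl0, show l * (1 - m / 2 * z) = l - m / 2 * (l * z) by ring]

section CyclicSuccessor

variable {m : ℕ}

lemma val_cnext (i : Fin m) : (cnext i : ℕ) = if (i : ℕ) + 1 = m then 0 else (i : ℕ) + 1 := by
  have := i.isLt
  split_ifs with h
  · simp [cnext, h]
  · exact Nat.mod_eq_of_lt (by omega)

lemma cnext_injective : Function.Injective (cnext : Fin m → Fin m) := by
  intro i j h
  have hi := i.isLt
  have hj := j.isLt
  have h' := congrArg Fin.val h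
  simp only [val_cnext] at h'
  ext
  split_ifs at h' <;> omega

lemma cnext_surjective : Function.Surjective (cnext : Fin m → Fin m) :=
  Finite.injective_iff_surjective.1 cnext_injective

lemma cnext_ne_self (hm : 2 ≤ m) (i : Fin m) : cnext i ≠ i := by
  intro h
  have := congrArg Fin.val h
  simp only [val_cnext] at this
  split_ifs at this <;> omega

lemma cnext_cnext_ne_self (hm : 3 ≤ m) (i : Fin m) : cnext (cnext i) ≠ i := by
  intro h
  have hi := i.isLt
  have := congrArg Fin.val h
  simp only [val_cnext] at this
  split_ifs at this <;> omega

end CyclicSuccessor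

section CycleWeight

variable {m : ℕ} {X : Type*}

def cycleEdge (f : Fin m → X) (i : Fin m) : Sym2 X := s(f i, f (cnext i))

lemma cycleWeight_eq_prod_cycleEdge (μ : Sym2 X → ℝ) (f : Fin m → X) :
    cycleWeight μ f = ∏ i, μ (cycleEdge f i) := rfl

lemma cycleWeight_nonneg {μ : Sym2 X → ℝ} (hμ : ∀ e, 0 ≤ μ e) (f : Fin m → X) :
    0 ≤ cycleWeight μ f :=
  Finset.prod_nonneg fun _ _ => hμ _

lemma mem_cycleEdge_iff {f : Fin m → X} {i : Fin m} {x : X} :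
    x ∈ cycleEdge f i ↔ x = f i ∨ x = f (cnext i) := Sym2.mem_iff

lemma cycleEdge_injective (hm : 3 ≤ m) {f : Fin m → X} (hf : Function.Injective f) :
    Function.Injective (cycleEdge f) := by
  intro i j h
  rcases Sym2.eq_iff.1 h with ⟨h1, -⟩ | ⟨h1, h2⟩
  · exact hf h1
  · exact absurd (hf h1 ▸ hf h2) (cnext_cnext_ne_self hm j)

lemma eq_of_cycleEdge_eq (hm : 3 ≤ m) {f g : Fin m → X}
    (hg : Function.Injective g) (h : cycleEdge f = cycleEdge g) : f = g := by
  funext i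
  obtain ⟨j, rfl⟩ := cnext_surjective i
  have hj := congrFun h j
  have hj' := congrFun h (cnext j)
  simp only [cycleEdge, Sym2.eq_iff] at hj hj'
  rcases hj with ⟨-, h⟩ | ⟨h1, h2⟩
  · exact h
  rcases hj' with ⟨h, -⟩ | ⟨h3, -⟩
  · exact h
  exact absurd (hg (h3.symm.trans h2)) (cnext_cnext_ne_self hm j)

lemma not_isDiag_cycleEdge (hm : 2 ≤ m) {f : Fin m → X} (hf : Function.Injective f)
    (i : Fin m) : ¬ (cycleEdge f i).IsDiag := by
  rw [cycleEdge, Sym2.mk_isDiag_iff]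
  exact fun h => cnext_ne_self hm i (hf h).symm

variable [DecidableEq X]

lemma two_le_card_filter_mem_cycleEdge (hm : 2 ≤ m) {f : Fin m → X} {x : X}
    (hx : x ∈ Set.range f) : 2 ≤ #{i | x ∈ cycleEdge f i} := by
  obtain ⟨i, rfl⟩ := hx
  obtain ⟨j, rfl⟩ := cnext_surjective i
  have hsub : {j, cnext j} ⊆ ({i | f (cnext j) ∈ cycleEdge f i} : Finset (Fin m)) := by
    simp [Finset.insert_subset_iff, cycleEdge]
  calc 2 = #{j, cnext j} := (Finset.card_pair (cnext_ne_self hm j).symm).symm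
    _ ≤ _ := Finset.card_le_card hsub

/-- Exact because `e` occurs at most once among the edges of an injective cycle. -/
lemma cycleWeight_smul_add_single (hm : 3 ≤ m) (μ : Sym2 X → ℝ) (e : Sym2 X) (t : ℝ)
    {f : Fin m → X} (hf : Function.Injective f) :
    cycleWeight ((1 - t) • μ + Pi.single e t) f = (1 - t) ^ m * cycleWeight μ f +
      t * (1 - t) ^ (m - 1) *
        ∑ i with cycleEdge f i = e, ∏ j ∈ univ.erase i, μ (cycleEdge f j) := by
  have hpow : (1 - t) ^ m = (1 - t) * (1 - t) ^ (m - 1) := by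
    rw [← pow_succ', Nat.sub_add_cancel (by omega)]
  rw [cycleWeight_eq_prod_cycleEdge, cycleWeight_eq_prod_cycleEdge]
  by_cases he : ∃ i, cycleEdge f i = e
  · obtain ⟨i, rfl⟩ := he
    have hinj := cycleEdge_injective hm hf
    have hfilter : ({j | cycleEdge f j = cycleEdge f i} : Finset (Fin m)) = {i} := by
      ext j
      simp [hinj.eq_iff]
    have hoff : ∀ j ∈ univ.erase i,
        ((1 - t) • μ + Pi.single (cycleEdge f i) t : Sym2 X → ℝ) (cycleEdge f j) =
          (1 - t) * μ (cycleEdge f j) := fun j hj => by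
      simp [hinj.ne (Finset.ne_of_mem_erase hj)]
    rw [hfilter, Finset.sum_singleton, ← Finset.mul_prod_erase _ _ (Finset.mem_univ i),
      ← Finset.mul_prod_erase univ (fun j => μ (cycleEdge f j)) (Finset.mem_univ i),
      Finset.prod_congr rfl hoff, Finset.prod_mul_distrib, Finset.prod_const,
      Finset.card_erase_of_mem (Finset.mem_univ _), Finset.card_univ, Fintype.card_fin, hpow]
    simp only [Pi.add_apply, Pi.smul_apply, smul_eq_mul, Pi.single_eq_same]
    ring
  · push Not at he
    rw [Finset.filter_false_of_mem fun j _ => he j, Finset.sum_empty, mul_zero, add_zero,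
      ← Fin.prod_const m (1 - t), ← Finset.prod_mul_distrib]
    refine Finset.prod_congr rfl fun j _ => ?_
    simp [he j]

def deleteVertex (μ : Sym2 X → ℝ) (x : X) (e : Sym2 X) : ℝ := if x ∈ e then 0 else μ e

lemma cycleWeight_deleteVertex (μ : Sym2 X → ℝ) (x : X) (f : Fin m → X) :
    cycleWeight (deleteVertex μ x) f = if x ∈ Set.range f then 0 else cycleWeight μ f := by
  rw [cycleWeight_eq_prod_cycleEdge, cycleWeight_eq_prod_cycleEdge]
  split_ifs with hx
  · obtain ⟨i, rfl⟩ := hx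
    exact Finset.prod_eq_zero (Finset.mem_univ i) (if_pos (Sym2.mem_mk_left _ _))
  · refine Finset.prod_congr rfl fun i _ => if_neg ?_
    rw [mem_cycleEdge_iff]
    rintro (h | h) <;> exact hx ⟨_, h.symm⟩

end CycleWeight

section CycleSum

variable {m : ℕ} {X : Type*} [Fintype X] [DecidableEq X]

noncomputable def cycleSum (μ : Sym2 X → ℝ) (m : ℕ) : ℝ :=
  ∑ f : Fin m → X with Function.Injective f, cycleWeight μ f

lemma beta_eq_cycleSum_div (μ : Sym2 X → ℝ) (m : ℕ) : beta μ m = cycleSum μ m / (2 * m) := by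
  rw [beta, cycleSum, Finset.sum_filter]

lemma cycleSum_nonneg {μ : Sym2 X → ℝ} (hμ : ∀ e, 0 ≤ μ e) : 0 ≤ cycleSum μ m :=
  Finset.sum_nonneg fun f _ => cycleWeight_nonneg hμ f

lemma cycleSum_le_sum_pow (hm : 3 ≤ m) {μ : Sym2 X → ℝ} (hμ : ∀ e, 0 ≤ μ e) :
    cycleSum μ m ≤ (∑ e, μ e) ^ m := by
  calc cycleSum μ m = ∑ F ∈ (univ.filter Function.Injective).image cycleEdge, ∏ i, μ (F i) := by
        rw [Finset.sum_image fun _ _ _ hg => eq_of_cycleEdge_eq hm (Finset.mem_filter.1 hg).2]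
        rfl
    _ ≤ ∑ F : Fin m → Sym2 X, ∏ i, μ (F i) :=
        Finset.sum_le_sum_of_subset_of_nonneg (Finset.subset_univ _)
          fun _ _ _ => Finset.prod_nonneg fun _ _ => hμ _
    _ = (∑ e, μ e) ^ m := (Fintype.sum_pow μ m).symm

lemma cycleSum_smul (c : ℝ) (μ : Sym2 X → ℝ) : cycleSum (c • μ) m = c ^ m * cycleSum μ m := by
  simp only [cycleSum, cycleWeight, Pi.smul_apply, smul_eq_mul, Finset.prod_mul_distrib,
    Finset.prod_const, Finset.card_univ, Fintype.card_fin, Finset.mul_sum]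

lemma cycleSum_comp_map_equiv {Y : Type*} [Fintype Y] [DecidableEq Y] (σ : X ≃ Y)
    (μ : Sym2 X → ℝ) : cycleSum (μ ∘ Sym2.map σ.symm) m = cycleSum μ m := by
  rw [cycleSum, cycleSum, Finset.sum_filter, Finset.sum_filter]
  refine Fintype.sum_equiv ((Equiv.refl (Fin m)).arrowCongr σ.symm) _ _ fun f => ?_
  change _ = if Function.Injective (σ.symm ∘ f) then cycleWeight μ (σ.symm ∘ f) else 0
  simp only [Function.Injective.of_comp_iff σ.symm.injective]
  rfl

noncomputable def cycleSumThrough (μ : Sym2 X → ℝ) (m : ℕ) (x : X) : ℝ :=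
  ∑ f : Fin m → X with Function.Injective f ∧ x ∈ Set.range f, cycleWeight μ f

lemma cycleSum_deleteVertex (μ : Sym2 X → ℝ) (x : X) :
    cycleSum (deleteVertex μ x) m = cycleSum μ m - cycleSumThrough μ m x := by
  simp only [cycleSum, cycleSumThrough, cycleWeight_deleteVertex]
  rw [Finset.sum_ite, Finset.sum_const_zero, zero_add, ← Finset.filter_filter, eq_sub_iff_add_eq',
    Finset.sum_filter_add_sum_filter_not]

lemma sum_mem_eq_wdeg {μ : Sym2 X → ℝ} (hdiag : ∀ e : Sym2 X, e.IsDiag → μ e = 0) (x : X) :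
    ∑ e with x ∈ e, μ e = wdeg μ x := by
  have himage : ({e | x ∈ e} : Finset (Sym2 X)) = univ.image fun y => s(x, y) := by
    ext e
    simp [Sym2.mem_iff_exists, eq_comm]
  rw [himage, Finset.sum_image fun _ _ _ _ => Sym2.congr_right.1, wdeg, Finset.filter_ne',
    ← Finset.add_sum_erase _ _ (Finset.mem_univ x), hdiag _ (Sym2.mk_isDiag_iff.2 rfl), zero_add]

end CycleSum

section Optimality

variable {m : ℕ} {X : Type*} [Fintype X] [DecidableEq X]

lemma IsProbMass.comp_map_equiv {Y : Type*} [Fintype Y] [DecidableEq Y] {μ : Sym2 X → ℝ}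
    (hμ : IsProbMass μ) (σ : X ≃ Y) : IsProbMass (μ ∘ Sym2.map σ.symm) := by
  obtain ⟨h0, hdiag, hsum⟩ := hμ
  refine ⟨fun e => h0 _, fun e he => hdiag _ ((Sym2.isDiag_map σ.symm.injective).2 he), ?_⟩
  rw [← hsum]
  refine Fintype.sum_bijective _ ?_ _ _ fun _ => rfl
  exact Function.bijective_iff_has_inverse.2
    ⟨Sym2.map σ, fun e => by simp [Sym2.map_map], fun e => by simp [Sym2.map_map]⟩

lemma bddAbove_beta (hm : 3 ≤ m) :
    BddAbove {b : ℝ | ∃ (n : ℕ) (μ : Sym2 (Fin n) → ℝ), IsProbMass μ ∧ b = beta μ m} := by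
  refine ⟨1, ?_⟩
  rintro _ ⟨n, μ, ⟨h0, -, hsum⟩, rfl⟩
  rw [beta_eq_cycleSum_div]
  refine div_le_one_of_le₀ ?_ (by positivity)
  calc cycleSum μ m ≤ 1 := by simpa [hsum] using cycleSum_le_sum_pow hm h0
    _ ≤ 2 * m := by norm_cast; omega

lemma beta_le_betaSup (hm : 3 ≤ m) {μ : Sym2 X → ℝ} (hμ : IsProbMass μ) :
    beta μ m ≤ betaSup m := by
  let σ := Fintype.equivFin X
  have hβ : beta (μ ∘ Sym2.map σ.symm) m = beta μ m := by
    rw [beta_eq_cycleSum_div, beta_eq_cycleSum_div, cycleSum_comp_map_equiv]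
  exact hβ ▸ le_csSup (bddAbove_beta hm) ⟨_, _, hμ.comp_map_equiv σ, rfl⟩

/-- Spreading the mass uniformly over the edges of one `m`-cycle gives `β > 0`. -/
lemma betaSup_pos (hm : 3 ≤ m) : 0 < betaSup m := by
  have hm0 : (0 : ℝ) < m := by norm_cast; omega
  let C : Finset (Sym2 (Fin m)) := univ.image (cycleEdge id)
  let μ : Sym2 (Fin m) → ℝ := fun e => if e ∈ C then (m : ℝ)⁻¹ else 0
  have hC : #C = m := by
    rw [Finset.card_image_of_injective _ (cycleEdge_injective hm Function.injective_id),
      Finset.card_univ, Fintype.card_fin]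
  have hμ : IsProbMass μ := by
    refine ⟨fun e => by positivity, fun e he => if_neg ?_, ?_⟩
    · intro hmem
      obtain ⟨i, -, rfl⟩ := Finset.mem_image.1 hmem
      exact not_isDiag_cycleEdge (by omega) Function.injective_id i he
    · rw [Finset.sum_ite_mem, Finset.univ_inter, Finset.sum_const, hC, nsmul_eq_mul,
        mul_inv_cancel₀ hm0.ne']
  have hcycle : cycleWeight μ id = (m : ℝ)⁻¹ ^ m := by
    rw [cycleWeight_eq_prod_cycleEdge, Finset.prod_congr rfl fun i _ =>
      if_pos (Finset.mem_image_of_mem _ (Finset.mem_univ i)), Finset.prod_const,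
      Finset.card_univ, Fintype.card_fin]
  have hpos : 0 < cycleSum μ m := by
    have : 0 < cycleWeight μ id := hcycle ▸ by positivity
    exact lt_of_lt_of_le this (Finset.single_le_sum (fun f _ => cycleWeight_nonneg hμ.1 f)
      (Finset.mem_filter.2 ⟨Finset.mem_univ _, Function.injective_id⟩))
  refine lt_of_lt_of_le ?_ (le_csSup (bddAbove_beta hm) ⟨m, μ, hμ, rfl⟩)
  rw [beta_eq_cycleSum_div]
  positivity

lemma cycleSum_le_of_beta_eq_betaSup (hm : 3 ≤ m) {μ ν : Sym2 X → ℝ}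
    (hopt : beta μ m = betaSup m) (hν : IsProbMass ν) : cycleSum ν m ≤ cycleSum μ m := by
  have h := hopt ▸ beta_le_betaSup hm hν
  rwa [beta_eq_cycleSum_div, beta_eq_cycleSum_div,
    div_le_div_iff_of_pos_right (by positivity)] at h

lemma cycleSum_pos_of_beta_eq_betaSup (hm : 3 ≤ m) {μ : Sym2 X → ℝ}
    (hopt : beta μ m = betaSup m) : 0 < cycleSum μ m := by
  have h := hopt ▸ betaSup_pos hm
  rw [beta_eq_cycleSum_div] at h
  exact (div_pos_iff_of_pos_right (by positivity)).1 h

end Optimality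

section EdgePerturbation

variable {m : ℕ} {X : Type*} [Fintype X] [DecidableEq X]

/-- `∂ cycleSum μ m / ∂ μ(e)`: the cycle sum is a polynomial in the values of `μ`. -/
noncomputable def edgeDerivative (μ : Sym2 X → ℝ) (m : ℕ) (e : Sym2 X) : ℝ :=
  ∑ f : Fin m → X with Function.Injective f,
    ∑ i with cycleEdge f i = e, ∏ j ∈ univ.erase i, μ (cycleEdge f j)

lemma cycleSum_smul_add_single (hm : 3 ≤ m) (μ : Sym2 X → ℝ) (e : Sym2 X) (t : ℝ) :
    cycleSum ((1 - t) • μ + Pi.single e t) m =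
      (1 - t) ^ m * cycleSum μ m + t * (1 - t) ^ (m - 1) * edgeDerivative μ m e := by
  rw [cycleSum, cycleSum, edgeDerivative, Finset.mul_sum, Finset.mul_sum,
    ← Finset.sum_add_distrib]
  exact Finset.sum_congr rfl fun f hf =>
    cycleWeight_smul_add_single hm μ e t (Finset.mem_filter.1 hf).2

lemma IsProbMass.smul_add_single {μ : Sym2 X → ℝ} (hμ : IsProbMass μ) {e : Sym2 X}
    (he : ¬ e.IsDiag) {t : ℝ} (ht0 : 0 ≤ t) (ht1 : t ≤ 1) :
    IsProbMass ((1 - t) • μ + Pi.single e t) := by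
  obtain ⟨h0, hdiag, hsum⟩ := hμ
  refine ⟨fun e' => add_nonneg (mul_nonneg (by linarith) (h0 e')) ?_, fun e' he' => ?_, ?_⟩
  · rw [Pi.single_apply]
    split_ifs
    exacts [ht0, le_rfl]
  · have hne : e' ≠ e := fun h => he (h ▸ he')
    simp [hdiag e' he', hne]
  · simp only [Pi.add_apply, Pi.smul_apply, smul_eq_mul, Finset.sum_add_distrib,
      ← Finset.mul_sum, hsum, Fintype.sum_pi_single']
    ring

lemma edgeDerivative_le_of_beta_eq_betaSup (hm : 3 ≤ m) {μ : Sym2 X → ℝ} (hμ : IsProbMass μ)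
    (hopt : beta μ m = betaSup m) {e : Sym2 X} (he : ¬ e.IsDiag) :
    edgeDerivative μ m e ≤ m * cycleSum μ m :=
  le_mul_of_forall_one_sub_pow_mul_add_le (cycleSum_nonneg hμ.1) fun t ht =>
    cycleSum_smul_add_single hm μ e t ▸
      cycleSum_le_of_beta_eq_betaSup hm hopt (hμ.smul_add_single he ht.1.le ht.2.le)

lemma sum_mul_mul_edgeDerivative (g μ : Sym2 X → ℝ) :
    ∑ e, g e * (μ e * edgeDerivative μ m e) =
      ∑ f : Fin m → X with Function.Injective f, cycleWeight μ f * ∑ i, g (cycleEdge f i) := by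
  simp only [edgeDerivative, Finset.mul_sum]
  rw [Finset.sum_comm]
  refine Finset.sum_congr rfl fun f _ => ?_
  rw [← Finset.sum_fiberwise univ (cycleEdge f)]
  refine Finset.sum_congr rfl fun e _ => Finset.sum_congr rfl fun i hi => ?_
  obtain rfl := (Finset.mem_filter.1 hi).2
  rw [cycleWeight_eq_prod_cycleEdge, ← Finset.mul_prod_erase _ _ (Finset.mem_univ i)]
  ring

/-- Every cycle through `x` uses two edges at `x`, and by optimality no edge is worth more than
`m · cycleSum μ m` to the cycle sum. -/
lemma two_mul_cycleSumThrough_le (hm : 3 ≤ m) {μ : Sym2 X → ℝ} (hμ : IsProbMass μ)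
    (hopt : beta μ m = betaSup m) (x : X) :
    2 * cycleSumThrough μ m x ≤ m * wdeg μ x * cycleSum μ m := by
  have h0 := hμ.1
  have hdiag := hμ.2.1
  let g : Sym2 X → ℝ := fun e => if x ∈ e then 1 else 0
  have hthrough : ∀ f : Fin m → X, x ∈ Set.range f → 2 ≤ ∑ i, g (cycleEdge f i) := by
    intro f hf
    rw [Finset.sum_boole]
    exact_mod_cast two_le_card_filter_mem_cycleEdge (by omega) hf
  have hderiv : ∀ e, g e * (μ e * edgeDerivative μ m e) ≤ g e * (μ e * (m * cycleSum μ m)) := by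
    intro e
    by_cases he : e.IsDiag
    · simp [hdiag e he]
    · exact mul_le_mul_of_nonneg_left (mul_le_mul_of_nonneg_left
        (edgeDerivative_le_of_beta_eq_betaSup hm hμ hopt he) (h0 e))
        (by positivity)
  calc 2 * cycleSumThrough μ m x
      = ∑ f : Fin m → X with Function.Injective f ∧ x ∈ Set.range f, cycleWeight μ f * 2 := by
        rw [cycleSumThrough, Finset.mul_sum]
        simp only [mul_comm]
    _ ≤ ∑ f : Fin m → X with Function.Injective f ∧ x ∈ Set.range f,
          cycleWeight μ f * ∑ i, g (cycleEdge f i) :=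
        Finset.sum_le_sum fun f hf => mul_le_mul_of_nonneg_left
          (hthrough f (Finset.mem_filter.1 hf).2.2) (cycleWeight_nonneg h0 f)
    _ ≤ ∑ f : Fin m → X with Function.Injective f, cycleWeight μ f * ∑ i, g (cycleEdge f i) :=
        Finset.sum_le_sum_of_subset_of_nonneg (Finset.monotone_filter_right _ fun _ _ => And.left)
          fun f _ _ => mul_nonneg (cycleWeight_nonneg h0 f)
            (Finset.sum_nonneg fun _ _ => by positivity)
    _ = ∑ e, g e * (μ e * edgeDerivative μ m e) := (sum_mul_mul_edgeDerivative g μ).symm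
    _ ≤ ∑ e, g e * (μ e * (m * cycleSum μ m)) := Finset.sum_le_sum fun e _ => hderiv e
    _ = m * wdeg μ x * cycleSum μ m := by
        simp only [g, ite_mul, one_mul, zero_mul, ← Finset.sum_filter, ← Finset.sum_mul,
          sum_mem_eq_wdeg hdiag]
        ring

end EdgePerturbation

section VertexDeletion

variable {m : ℕ} {X : Type*} [Fintype X] [DecidableEq X]

lemma IsProbMass.smul_deleteVertex {μ : Sym2 X → ℝ} (hμ : IsProbMass μ) {x : X}
    (hx : wdeg μ x < 1) : IsProbMass ((1 - wdeg μ x)⁻¹ • deleteVertex μ x) := by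
  obtain ⟨h0, hdiag, hsum⟩ := hμ
  have hpos : 0 < 1 - wdeg μ x := by linarith
  refine ⟨fun e => ?_, fun e he => ?_, ?_⟩
  · refine mul_nonneg (inv_nonneg.2 hpos.le) ?_
    unfold deleteVertex
    split_ifs
    exacts [le_rfl, h0 e]
  · simp only [Pi.smul_apply, smul_eq_mul, deleteVertex]
    split_ifs <;> simp [hdiag e he]
  · have hsplit := Finset.sum_filter_add_sum_filter_not univ (fun e => x ∈ e) μ
    rw [hsum, sum_mem_eq_wdeg hdiag] at hsplit
    simp only [Pi.smul_apply, smul_eq_mul, ← Finset.mul_sum, deleteVertex, Finset.sum_ite,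
      Finset.sum_const_zero, zero_add]
    rw [eq_sub_of_add_eq' hsplit, inv_mul_cancel₀ hpos.ne']

/-- Deleting `x` and renormalising is admissible, so optimality bounds the weight of the
cycles avoiding `x`. -/
lemma one_sub_pow_mul_cycleSum_le (hm : 3 ≤ m) {μ : Sym2 X → ℝ} (hμ : IsProbMass μ)
    (hopt : beta μ m = betaSup m) {x : X} (hx : wdeg μ x < 1) :
    (1 - (1 - wdeg μ x) ^ m) * cycleSum μ m ≤ cycleSumThrough μ m x := by
  have hpos : 0 < (1 - wdeg μ x) ^ m := pow_pos (by linarith) m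
  have h := cycleSum_le_of_beta_eq_betaSup hm hopt (hμ.smul_deleteVertex hx)
  rw [cycleSum_smul, cycleSum_deleteVertex, inv_pow, inv_mul_le_iff₀ hpos] at h
  linarith

end VertexDeletion

lemma two_mul_one_sub_one_sub_pow_le {m : ℕ} {X : Type*} [Fintype X] [DecidableEq X]
    (hm : 3 ≤ m) {μ : Sym2 X → ℝ} (hμ : IsProbMass μ) (hopt : beta μ m = betaSup m) {x : X}
    (hx : wdeg μ x < 1) : 2 * (1 - (1 - wdeg μ x) ^ m) ≤ m * wdeg μ x := by
  refine le_of_mul_le_mul_right ?_ (cycleSum_pos_of_beta_eq_betaSup hm hopt)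
  linarith [one_sub_pow_mul_cycleSum_le hm hμ hopt hx, two_mul_cycleSumThrough_le hm hμ hopt x]

/-- For `m ≥ 3` and `μ ∈ Opt(m)`: if `z ∈ (0, 1)` satisfies `1 - (m/2)·z > (1 - z)^m`,
then `μ̄(x) > z` for every `x ∈ supp μ̄`. -/
theorem wdeg_lowerbound (m : ℕ) (hm : 3 ≤ m) {X : Type*} [Fintype X] [DecidableEq X]
    (μ : Sym2 X → ℝ) (hμ : IsProbMass μ) (hopt : beta μ m = betaSup m)
    (z : ℝ) (hz : z ∈ Set.Ioo (0 : ℝ) 1) (hineq : 1 - (m : ℝ) / 2 * z > (1 - z) ^ m) :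
    ∀ x : X, 0 < wdeg μ x → z < wdeg μ x := by
  intro x hx
  by_contra! hxz
  have h := two_mul_one_sub_one_sub_pow_le hm hμ hopt (hxz.trans_lt hz.2)
  have h' := one_sub_pow_lt_of_le hx hxz hz.2.le hineq
  linarith
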